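/- arXiv:1702.04760 — 3 statements merged into one kernel-verified Lean document; each statement's English description precedes it below -/
import Mathlib

section
/- Let [a_0; a_1, …, a_n] be a (σ,k)-permutiple with n ≥ 1. Then it is continuant-preserving if and only if γ_0·γ_1⋯γ_{n−1} = k·γ'_0·γ'_1⋯γ'_{n−1}, where γ_j and γ'_j are the tails of [a_0; …, a_n] and of the permuted continued fraction [a_{σ(0)}; …, a_{σ(n)}], respectively. -/
/-- Value of the finite simple continued fraction `[x₀; x₁, …, xₙ]`. -/
def cfv : List ℚ → ℚ
  | [] => 0
  | [x] => x
  | x :: y :: t => x + 1 / cfv (y :: t)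

/-- The continuant `K(x₀, …, xₙ)`: `K() = 1`, `K(x₀) = x₀`, and the usual
three-term recurrence. -/
def cont : List ℕ → ℕ
  | [] => 1
  | [x] => x
  | x :: y :: t => x * cont (y :: t) + cont t

/-- The digit string of `a`, as a list of rationals. -/
def digitsQ {N : ℕ} (a : Fin N → ℕ) : List ℚ := (List.ofFn a).map (fun x => (x : ℚ))

/-- `[a₀; a₁, …, aₙ]` (canonical: positive digits, last digit ≥ 2) is a
`(σ,k)`-permutiple: it equals `k` times the continued fraction of the permuted digits. -/
def IsPermutiple {n : ℕ} (a : Fin (n+1) → ℕ) (σ : Equiv.Perm (Fin (n+1))) (k : ℕ) : Prop :=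
  (∀ j, 0 < a j) ∧ 2 ≤ a (Fin.last n) ∧ 1 < k ∧
    cfv (digitsQ a) = k * cfv (digitsQ (a ∘ σ))

/-- A `(σ,k)`-permutiple is continuant-preserving if
`K(a₀,…,aₙ) = K(a_{σ(0)},…,a_{σ(n)})`. -/
def ContinuantPreserving {n : ℕ} (a : Fin (n+1) → ℕ) (σ : Equiv.Perm (Fin (n+1))) : Prop :=
  cont (List.ofFn a) = cont (List.ofFn (a ∘ σ))

/-- A `(σ,k)`-permutiple is perfect if `a_j = k·a_{σ(j)}` for even `j` and
`a_{σ(j)} = k·a_j` for odd `j`. -/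
def IsPerfect {n : ℕ} (a : Fin (n+1) → ℕ) (σ : Equiv.Perm (Fin (n+1))) (k : ℕ) : Prop :=
  ∀ j : Fin (n+1), (Even (j : ℕ) → a j = k * a (σ j)) ∧ (Odd (j : ℕ) → a (σ j) = k * a j)

/-- A `(σ,k)`-permutiple is symmetric if `a_j·a_{n−j} = a_{σ(j)}·a_{σ(n−j)}` for all `j`. -/
def IsSymmetric {n : ℕ} (a : Fin (n+1) → ℕ) (σ : Equiv.Perm (Fin (n+1))) : Prop :=
  ∀ j : Fin (n+1), a j * a j.rev = a (σ j) * a (σ j.rev)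

/-- A Landess permutiple: a continuant-preserving `(σ,k)`-permutiple with
`q_{n−1} = q'_{n−1}` and `p_{n−1} = k·p'_{n−1}`. -/
def IsLandess {n : ℕ} (a : Fin (n+1) → ℕ) (σ : Equiv.Perm (Fin (n+1))) (k : ℕ) : Prop :=
  IsPermutiple a σ k ∧ ContinuantPreserving a σ ∧
    cont ((List.ofFn a).tail.dropLast) = cont ((List.ofFn (a ∘ σ)).tail.dropLast) ∧
    cont ((List.ofFn a).dropLast) = k * cont ((List.ofFn (a ∘ σ)).dropLast)

/-!
Writing `P/Q` for the convergent of `[a₀; …, aₙ]`, with `P = K(a₀, …, aₙ)` and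
`Q = K(a₁, …, aₙ)`, each tail is a ratio of consecutive continuants,
`γ_j = K(a_{j+2}, …, aₙ) / K(a_{j+1}, …, aₙ)`, so `γ₀⋯γ_{n−1}` telescopes to `1/Q`.
The permutiple equation `P/Q = k·P'/Q'` then makes `P = P'` equivalent to `Q' = k·Q`.
-/

lemma cont_pos : ∀ {l : List ℕ}, (∀ x ∈ l, 0 < x) → 0 < cont l
  | [], _ => Nat.one_pos
  | [x], h => h x (by simp)
  | x :: y :: t, h => by
    have hx : 0 < x := h x (by simp)
    have hyt : 0 < cont (y :: t) := cont_pos fun z hz => h z (List.mem_cons_of_mem _ hz)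
    exact Nat.add_pos_left (Nat.mul_pos hx hyt) _

lemma cfv_map_cast_cons (x : ℕ) :
    ∀ t : List ℕ, (∀ y ∈ t, 0 < y) →
      cfv ((x :: t).map (↑)) = (cont (x :: t) : ℚ) / cont t
  | [], _ => by simp [cfv, cont]
  | y :: t, h => by
    have ih := cfv_map_cast_cons y t fun z hz => h z (List.mem_cons_of_mem _ hz)
    have hyt : (cont (y :: t) : ℚ) ≠ 0 := by exact_mod_cast (cont_pos h).ne'
    have ht : (cont t : ℚ) ≠ 0 := by
      exact_mod_cast (cont_pos fun z hz => h z (List.mem_cons_of_mem _ hz)).ne'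
    simp only [List.map_cons] at ih ⊢
    rw [cfv, ih, cont]
    push_cast
    field_simp

lemma prod_one_div_cfv_drop :
    ∀ t : List ℕ, (∀ y ∈ t, 0 < y) →
      ∏ j ∈ Finset.range t.length, 1 / cfv ((t.map (↑)).drop j) = 1 / (cont t : ℚ)
  | [], _ => by simp [cont]
  | y :: t, h => by
    have ht : (cont t : ℚ) ≠ 0 := by
      exact_mod_cast (cont_pos fun z hz => h z (List.mem_cons_of_mem _ hz)).ne'
    rw [List.length_cons, Finset.prod_range_succ', List.drop_zero]
    simp only [List.map_cons, List.drop_succ_cons]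
    rw [prod_one_div_cfv_drop t fun z hz => h z (List.mem_cons_of_mem _ hz),
      ← List.map_cons, cfv_map_cast_cons y t fun z hz => h z (List.mem_cons_of_mem _ hz)]
    field_simp

lemma eq_iff_one_div_eq_mul_one_div {K : Type*} [Field K] {p q p' q' k : K}
    (hp : p ≠ 0) (hq : q ≠ 0) (hq' : q' ≠ 0) (h : p / q = k * (p' / q')) :
    p = p' ↔ 1 / q = k * (1 / q') := by
  rw [mul_one_div, div_eq_div_iff hq hq', one_mul]
  rw [← mul_div_assoc, div_eq_div_iff hq hq'] at h
  have hk : k ≠ 0 := by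
    rintro rfl
    simp_all
  constructor
  · rintro rfl
    exact mul_left_cancel₀ hp (by linear_combination h)
  · intro hkq
    exact mul_left_cancel₀ (mul_ne_zero hk hq) (by linear_combination h - p * hkq)

-- In `digitsQ` the cast is elaborated as a monadic lift of the whole list (a `flatMap` of
-- singletons) followed by an identity map, not as a map of casts.
lemma digitsQ_eq_map_cast {N : ℕ} (a : Fin N → ℕ) : digitsQ a = (List.ofFn a).map (↑) :=
  (List.map_id _).trans (List.flatMap_pure_eq_map _ _)

lemma cont_ofFn_pos {N : ℕ} {b : Fin N → ℕ} (hb : ∀ j, 0 < b j) : 0 < cont (List.ofFn b) :=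
  cont_pos (List.forall_mem_ofFn_iff.mpr hb)

lemma cfv_digitsQ {n : ℕ} {a : Fin (n+1) → ℕ} (ha : ∀ j, 0 < a j) :
    cfv (digitsQ a) = (cont (List.ofFn a) : ℚ) / cont (List.ofFn (Fin.tail a)) := by
  rw [digitsQ_eq_map_cast, List.ofFn_succ]
  exact cfv_map_cast_cons _ _ (List.forall_mem_ofFn_iff.mpr fun j => ha j.succ)

lemma prod_one_div_cfv_digitsQ_drop {n : ℕ} {a : Fin (n+1) → ℕ} (ha : ∀ j, 0 < a j) :
    ∏ j ∈ Finset.range n, 1 / cfv ((digitsQ a).drop (j+1)) =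
      1 / (cont (List.ofFn (Fin.tail a)) : ℚ) := by
  have h := prod_one_div_cfv_drop (List.ofFn (Fin.tail a))
    (List.forall_mem_ofFn_iff.mpr fun j => ha j.succ)
  rw [List.length_ofFn] at h
  rw [digitsQ_eq_map_cast, List.ofFn_succ]
  simp only [List.map_cons, List.drop_succ_cons]
  exact h

theorem stmt1_general {n : ℕ} (a : Fin (n+1) → ℕ) (σ : Equiv.Perm (Fin (n+1))) (k : ℕ)
    (h : IsPermutiple a σ k) :
    ContinuantPreserving a σ ↔
      (∏ j ∈ Finset.range n, 1 / cfv ((digitsQ a).drop (j+1))) =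
        k * ∏ j ∈ Finset.range n, 1 / cfv ((digitsQ (a ∘ σ)).drop (j+1)) := by
  obtain ⟨ha, -, -, hval⟩ := h
  have haσ : ∀ j, 0 < (a ∘ σ) j := fun j => ha (σ j)
  rw [cfv_digitsQ ha, cfv_digitsQ haσ] at hval
  rw [ContinuantPreserving, prod_one_div_cfv_digitsQ_drop ha,
    prod_one_div_cfv_digitsQ_drop haσ, ← Nat.cast_inj (R := ℚ)]
  exact eq_iff_one_div_eq_mul_one_div (by exact_mod_cast (cont_ofFn_pos ha).ne')
    (by exact_mod_cast (cont_ofFn_pos fun j => ha j.succ).ne')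
    (by exact_mod_cast (cont_ofFn_pos fun j => haσ j.succ).ne') hval

/-- A `(σ,k)`-permutiple (with `n ≥ 1`) is continuant-preserving iff
`γ₀·γ₁⋯γ_{n−1} = k·γ'₀·γ'₁⋯γ'_{n−1}`, where the tails are
`γ_j = 1/[a_{j+1};…,a_n]` and `γ'_j = 1/[a_{σ(j+1)};…,a_{σ(n)}]`. -/
theorem stmt1 {n : ℕ} (hn : 1 ≤ n) (a : Fin (n+1) → ℕ) (σ : Equiv.Perm (Fin (n+1))) (k : ℕ)
    (h : IsPermutiple a σ k) :
    ContinuantPreserving a σ ↔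
      (∏ j ∈ Finset.range n, 1 / cfv ((digitsQ a).drop (j+1))) =
        k * ∏ j ∈ Finset.range n, 1 / cfv ((digitsQ (a ∘ σ)).drop (j+1)) :=
  stmt1_general a σ k h
end

section
/- Let [a_0; a_1, …, a_n] be a (σ,k)-permutiple, and set p_n = K_{n+1}(a_0, …, a_n) and p'_n = K_{n+1}(a_{σ(0)}, …, a_{σ(n)}). If p_n/p'_n < 2, then the permutiple is continuant-preserving, i.e., p_n = p'_n. -/
lemma cont_pos_s3 (L : List ℕ) (h : ∀ x ∈ L, 0 < x) : 0 < cont L := by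
  induction L with
  | nil => simp [cont]
  | cons x t ih =>
    cases t with
    | nil => simpa [cont] using h x (by simp)
    | cons y s =>
      have h1 := ih (fun z hz => h z (List.mem_cons_of_mem _ hz))
      have hx := h x (by simp)
      calc 0 < x * cont (y :: s) := Nat.mul_pos hx h1
        _ ≤ cont (x :: y :: s) := by rw [cont]; exact Nat.le_add_right _ _

lemma cont_coprime (L : List ℕ) : Nat.Coprime (cont L) (cont L.tail) := by
  induction L with
  | nil => simp [cont, Nat.Coprime]
  | cons x t ih =>
    cases t with
    | nil => simp [cont, Nat.Coprime]
    | cons y s =>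
      have ih' : Nat.Coprime (cont s) (cont (y :: s)) := Nat.Coprime.symm ih
      have : Nat.Coprime (cont s + cont (y :: s) * x) (cont (y :: s)) :=
        (Nat.coprime_add_mul_left_left _ _ _).mpr ih'
      rw [show cont (x :: y :: s) = x * cont (y :: s) + cont s from rfl,
        List.tail_cons]
      rwa [Nat.add_comm, Nat.mul_comm] at this

lemma cfv_eq (L : List ℕ) (hne : L ≠ []) (h : ∀ x ∈ L, 0 < x) :
    cfv (L.map (fun x => (x : ℚ))) = (cont L : ℚ) / (cont L.tail : ℚ) := by
  induction L with
  | nil => simp at hne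
  | cons x t ih =>
    cases t with
    | nil => simp [cfv, cont]
    | cons y s =>
      have ih' := ih (by simp) (fun z hz => h z (List.mem_cons_of_mem _ hz))
      have hp1 : (0 : ℚ) < (cont (y :: s) : ℚ) := by
        exact_mod_cast cont_pos_s3 _ (fun z hz => h z (List.mem_cons_of_mem _ hz))
      have hp2 : (0 : ℚ) < (cont s : ℚ) := by
        exact_mod_cast cont_pos_s3 _
          (fun z hz => h z (List.mem_cons_of_mem _ (List.mem_cons_of_mem _ hz)))
      rw [show ((x :: y :: s).map (fun x => (x : ℚ)))
            = (x : ℚ) :: (y :: s).map (fun x => (x : ℚ)) from rfl]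
      rw [show ((y :: s).map (fun x => (x : ℚ)))
            = (y : ℚ) :: s.map (fun x => (x : ℚ)) from rfl]
      rw [show cfv ((x : ℚ) :: (y : ℚ) :: s.map (fun x => (x : ℚ)))
            = (x : ℚ) + 1 / cfv ((y : ℚ) :: s.map (fun x => (x : ℚ))) from rfl]
      rw [show ((y : ℚ) :: s.map (fun x => (x : ℚ)))
            = (y :: s).map (fun x => (x : ℚ)) from rfl, ih']
      rw [List.tail_cons, List.tail_cons] at *
      rw [show cont (x :: y :: s) = x * cont (y :: s) + cont s from rfl]
      push_cast
      field_simp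

/-- If a `(σ,k)`-permutiple satisfies `pₙ/p'ₙ < 2`, where `pₙ = K_{n+1}(a₀,…,aₙ)`
and `p'ₙ = K_{n+1}(a_{σ(0)},…,a_{σ(n)})`, then it is continuant-preserving, i.e., `pₙ = p'ₙ`. -/
theorem stmt3 {n : ℕ} (a : Fin (n+1) → ℕ) (σ : Equiv.Perm (Fin (n+1))) (k : ℕ)
    (h : IsPermutiple a σ k)
    (hlt : (cont (List.ofFn a) : ℚ) / (cont (List.ofFn (a ∘ σ)) : ℚ) < 2) :
    cont (List.ofFn a) = cont (List.ofFn (a ∘ σ)) := by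
  obtain ⟨hpos, -, hk, heq⟩ := h
  set L := List.ofFn a with hL
  set M := List.ofFn (a ∘ σ) with hM
  have hLpos : ∀ x ∈ L, 0 < x := by
    intro x hx
    rw [hL, List.mem_ofFn] at hx
    obtain ⟨j, rfl⟩ := hx
    exact hpos j
  have hMpos : ∀ x ∈ M, 0 < x := by
    intro x hx
    rw [hM, List.mem_ofFn] at hx
    obtain ⟨j, rfl⟩ := hx
    exact hpos (σ j)
  have hLne : L ≠ [] := by rw [hL]; simp [← List.length_eq_zero_iff]
  have hMne : M ≠ [] := by rw [hM]; simp [← List.length_eq_zero_iff]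
  have e1 : cfv (digitsQ a) = (cont L : ℚ) / (cont L.tail : ℚ) := cfv_eq L hLne hLpos
  have e2 : cfv (digitsQ (a ∘ σ)) = (cont M : ℚ) / (cont M.tail : ℚ) := cfv_eq M hMne hMpos
  have hpL : 0 < cont L := cont_pos_s3 L hLpos
  have hpM : 0 < cont M := cont_pos_s3 M hMpos
  have hqL : 0 < cont L.tail := cont_pos_s3 _ (fun x hx => hLpos x (List.mem_of_mem_tail hx))
  have hqM : 0 < cont M.tail := cont_pos_s3 _ (fun x hx => hMpos x (List.mem_of_mem_tail hx))
  have hqLQ : (cont L.tail : ℚ) ≠ 0 := by exact_mod_cast hqL.ne'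
  have hqMQ : (cont M.tail : ℚ) ≠ 0 := by exact_mod_cast hqM.ne'
  -- cross-multiplied equation
  have key : cont L * cont M.tail = k * cont M * cont L.tail := by
    have : (cont L : ℚ) * cont M.tail = (k : ℚ) * cont M * cont L.tail := by
      rw [e1, e2] at heq
      field_simp at heq
      linarith [heq]
    exact_mod_cast this
  have hdvd : cont M ∣ cont L := by
    have h1 : cont M ∣ cont L * cont M.tail := by
      rw [key]; exact ⟨k * cont L.tail, by ring⟩
    exact (cont_coprime M).dvd_of_dvd_mul_right h1
  obtain ⟨m, hm⟩ := hdvd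
  have hMQ : (0 : ℚ) < (cont M : ℚ) := by exact_mod_cast hpM
  have hlt2 : cont L < 2 * cont M := by
    have : (cont L : ℚ) < 2 * cont M := by
      rw [div_lt_iff₀ hMQ] at hlt; linarith
    exact_mod_cast this
  have hm1 : m = 1 := by
    rcases Nat.lt_or_ge m 2 with hm2 | hm2
    · interval_cases m
      · omega
      · rfl
    · nlinarith [hm, hlt2, hpM]
  subst hm1
  simpa using hm
end

section
/- Let [a_0; a_1, …, a_n] be a (σ,k)-permutiple with n ≥ 1. Then it is perfect if and only if its tails satisfy γ_j = k·γ'_j for every even j and γ'_j = k·γ_j for every odd j, for all 0 ≤ j ≤ n−1, where γ_j and γ'_j are the tails of [a_0; …, a_n] and of the permuted continued fraction [a_{σ(0)}; …, a_{σ(n)}], respectively. -/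
lemma cfv_cons (x : ℚ) (l : List ℚ) (hl : l ≠ []) : cfv (x :: l) = x + 1 / cfv l := by
  cases l with
  | nil => exact absurd rfl hl
  | cons y t => rfl

lemma cfv_pos : ∀ l : List ℚ, (∀ x ∈ l, 0 < x) → l ≠ [] → 0 < cfv l
  | [], _, h => absurd rfl h
  | [x], h, _ => by simpa [cfv] using h x (by simp)
  | x :: y :: t, h, _ => by
    have h1 := cfv_pos (y :: t) (fun z hz => h z (List.mem_cons_of_mem _ hz)) (by simp)
    have h2 : 0 < x := h x (by simp)
    rw [cfv_cons x _ (by simp)]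
    positivity

lemma flatMap_single (l : List ℕ) (f : ℕ → ℚ) : (l.flatMap fun a => [f a]) = l.map f := by
  induction l with
  | nil => rfl
  | cons x t ih => simp [List.flatMap_cons, ih]

lemma digitsQ_eq {N : ℕ} (a : Fin N → ℕ) : digitsQ a = (List.ofFn a).map Nat.cast := by
  simp only [digitsQ, List.map_eq_flatMap]
  simp [flatMap_single, Function.comp]

lemma digitsQ_length {N : ℕ} (a : Fin N → ℕ) : (digitsQ a).length = N := by
  rw [digitsQ_eq]; simp

lemma digitsQ_drop {N : ℕ} (a : Fin (N+1) → ℕ) (j : ℕ) (hj : j ≤ N) :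
    (digitsQ a).drop j = ((a ⟨j, by omega⟩ : ℚ)) :: (digitsQ a).drop (j+1) := by
  rw [List.drop_eq_getElem_cons (by rw [digitsQ_length]; omega)]
  congr 1
  simp only [digitsQ_eq, List.getElem_map, List.getElem_ofFn]

lemma digitsQ_drop_pos {N : ℕ} (a : Fin (N+1) → ℕ) (hpos : ∀ j, 0 < a j) (j : ℕ)
    (hj : j ≤ N) : 0 < cfv ((digitsQ a).drop j) := by
  apply cfv_pos
  · intro x hx
    have hx' : x ∈ digitsQ a := List.mem_of_mem_drop hx
    rw [digitsQ_eq] at hx'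
    simp only [List.mem_map, List.mem_ofFn] at hx'
    obtain ⟨m, ⟨i, rfl⟩, rfl⟩ := hx'
    exact_mod_cast hpos i
  · apply List.ne_nil_of_length_pos
    rw [List.length_drop, digitsQ_length]
    omega

lemma cfv_drop_last {N : ℕ} (a : Fin (N+1) → ℕ) :
    cfv ((digitsQ a).drop N) = (a (Fin.last N) : ℚ) := by
  rw [digitsQ_drop a N le_rfl]
  have h2 : (digitsQ a).drop (N+1) = [] := by
    apply List.drop_eq_nil_of_le
    rw [digitsQ_length]
  rw [h2]
  rfl

lemma cfv_drop {N : ℕ} (a : Fin (N+1) → ℕ) (j : ℕ) (hj : j < N) :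
    cfv ((digitsQ a).drop j) = (a ⟨j, by omega⟩ : ℚ) + 1 / cfv ((digitsQ a).drop (j+1)) := by
  rw [digitsQ_drop a j (le_of_lt hj), cfv_cons]
  apply List.ne_nil_of_length_pos
  rw [List.length_drop, digitsQ_length]
  omega

lemma inv_aux (kq V : ℚ) (hk : kq ≠ 0) : kq * (1 / (kq * V)) = 1 / V := by
  rw [one_div, mul_inv, ← mul_assoc, mul_inv_cancel₀ hk, one_mul, one_div]

lemma expand_aux (kq V B : ℚ) (hk : kq ≠ 0) :
    kq * (B + 1 / (kq * V)) = kq * B + 1 / V := by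
  rw [mul_add, inv_aux kq V hk]

lemma cancel_aux (kq V A B : ℚ) (hk : kq ≠ 0)
    (h : A + 1 / V = kq * (B + 1 / (kq * V))) : A = kq * B := by
  rw [expand_aux kq V B hk] at h
  exact add_right_cancel h

lemma flip_aux (kq V W : ℚ) (hV : 0 < V) (hW : 0 < W) (h : 1 / W = kq * (1 / V)) :
    V = kq * W := by
  have hVne := ne_of_gt hV
  have hWne := ne_of_gt hW
  field_simp at h
  linear_combination h

/-- A `(σ,k)`-permutiple (with `n ≥ 1`) is perfect iff its tails satisfy
`γ_j = k·γ'_j` for even `j` and `γ'_j = k·γ_j` for odd `j`, for all `0 ≤ j ≤ n−1`,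
where `γ_j = 1/[a_{j+1};…,a_n]` and `γ'_j = 1/[a_{σ(j+1)};…,a_{σ(n)}]`. -/
theorem stmt9 {n : ℕ} (hn : 1 ≤ n) (a : Fin (n+1) → ℕ) (σ : Equiv.Perm (Fin (n+1))) (k : ℕ)
    (h : IsPermutiple a σ k) :
    IsPerfect a σ k ↔
      ∀ j < n,
        (Even j → 1 / cfv ((digitsQ a).drop (j+1)) =
          k * (1 / cfv ((digitsQ (a ∘ σ)).drop (j+1)))) ∧
        (Odd j → 1 / cfv ((digitsQ (a ∘ σ)).drop (j+1)) =
          k * (1 / cfv ((digitsQ a).drop (j+1)))) := by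
  obtain ⟨hpos, hlast, hk, hval⟩ := h
  have hpos' : ∀ j, 0 < (a ∘ σ) j := fun j => hpos _
  have hkQ : (0 : ℚ) < (k : ℚ) := by exact_mod_cast Nat.lt_of_lt_of_le Nat.zero_lt_one hk.le
  have hkne : (k : ℚ) ≠ 0 := ne_of_gt hkQ
  have hV : ∀ j, j ≤ n → 0 < cfv ((digitsQ a).drop j) :=
    fun j hj => digitsQ_drop_pos a hpos j hj
  have hV' : ∀ j, j ≤ n → 0 < cfv ((digitsQ (a ∘ σ)).drop j) :=
    fun j hj => digitsQ_drop_pos _ hpos' j hj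
  constructor
  · intro hperf
    have key : ∀ d j, j + d = n →
        (Even j → cfv ((digitsQ a).drop j) = k * cfv ((digitsQ (a ∘ σ)).drop j)) ∧
        (Odd j → cfv ((digitsQ (a ∘ σ)).drop j) = k * cfv ((digitsQ a).drop j)) := by
      intro d
      induction d with
      | zero =>
        intro j hj
        have hj' : n = j := by omega
        subst hj'
        rw [cfv_drop_last, cfv_drop_last]
        have hp := hperf (Fin.last n)
        constructor
        · intro he
          have h1 := hp.1 (by simpa using he)
          exact_mod_cast h1
        · intro ho
          have h1 := hp.2 (by simpa using ho)
          exact_mod_cast h1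
      | succ d ih =>
        intro j hj
        have hjn : j < n := by omega
        have ih2 := ih (j+1) (by omega)
        have hVpne : cfv ((digitsQ a).drop (j+1)) ≠ 0 := ne_of_gt (hV (j+1) (by omega))
        have hVpne' : cfv ((digitsQ (a ∘ σ)).drop (j+1)) ≠ 0 := ne_of_gt (hV' (j+1) (by omega))
        rw [cfv_drop a j hjn, cfv_drop (a ∘ σ) j hjn]
        have hp := hperf ⟨j, by omega⟩
        constructor
        · intro he
          have h1 := ih2.2 (Even.add_one he)
          have h2 : ((a ⟨j, by omega⟩ : ℕ) : ℚ) = k * ((a ∘ σ) ⟨j, by omega⟩ : ℕ) := by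
            exact_mod_cast hp.1 (by simpa using he)
          rw [h1, h2]
          exact (expand_aux _ _ _ hkne).symm
        · intro ho
          have h1 := ih2.1 (Odd.add_one ho)
          have h2 : (((a ∘ σ) ⟨j, by omega⟩ : ℕ) : ℚ) = k * ((a ⟨j, by omega⟩ : ℕ) : ℚ) := by
            exact_mod_cast hp.2 (by simpa using ho)
          rw [h1, h2]
          exact (expand_aux _ _ _ hkne).symm
    intro j hjn
    constructor
    · intro he
      have h1 := (key (n - (j+1)) (j+1) (by omega)).2 (Even.add_one he)
      rw [h1]
      exact (inv_aux _ _ hkne).symm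
    · intro ho
      have h1 := (key (n - (j+1)) (j+1) (by omega)).1 (Odd.add_one ho)
      rw [h1]
      exact (inv_aux _ _ hkne).symm
  · intro ht
    have rel : ∀ j, j ≤ n →
        (Even j → cfv ((digitsQ a).drop j) = k * cfv ((digitsQ (a ∘ σ)).drop j)) ∧
        (Odd j → cfv ((digitsQ (a ∘ σ)).drop j) = k * cfv ((digitsQ a).drop j)) := by
      intro j hj
      cases j with
      | zero =>
        constructor
        · intro _
          simpa using hval
        · intro ho
          exact absurd ho (by simp)
      | succ m =>
        have hm := ht m (by omega)
        have hVm := hV (m+1) (by omega)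
        have hVm' := hV' (m+1) (by omega)
        constructor
        · intro he
          have hom : Odd m := Nat.not_even_iff_odd.mp (Nat.even_add_one.mp he)
          exact flip_aux _ _ _ hVm hVm' (hm.2 hom)
        · intro ho
          have hem : Even m := by
            rcases Nat.even_or_odd m with h' | h'
            · exact h'
            · exact absurd (Odd.add_one h') (Nat.not_even_iff_odd.mpr ho)
          exact flip_aux _ _ _ hVm' hVm (hm.1 hem)
    intro i
    constructor
    · intro he
      rcases eq_or_lt_of_le (Nat.lt_succ_iff.mp i.isLt) with hcase | hlt
      · have h1 := (rel n le_rfl).1 (hcase ▸ he)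
        rw [cfv_drop_last, cfv_drop_last] at h1
        have h2 : a (Fin.last n) = k * (a ∘ σ) (Fin.last n) := by exact_mod_cast h1
        have hi : i = Fin.last n := Fin.ext hcase
        rw [hi]
        exact h2
      · have relj := (rel i.val (le_of_lt hlt)).1 he
        have relj1 := (rel (i.val+1) hlt).2 (Even.add_one he)
        rw [cfv_drop a i.val hlt, cfv_drop (a ∘ σ) i.val hlt, relj1] at relj
        have h3 := cancel_aux _ _ _ _ hkne relj
        exact_mod_cast h3
    · intro ho
      rcases eq_or_lt_of_le (Nat.lt_succ_iff.mp i.isLt) with hcase | hlt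
      · have h1 := (rel n le_rfl).2 (hcase ▸ ho)
        rw [cfv_drop_last, cfv_drop_last] at h1
        have h2 : (a ∘ σ) (Fin.last n) = k * a (Fin.last n) := by exact_mod_cast h1
        have hi : i = Fin.last n := Fin.ext hcase
        rw [hi]
        exact h2
      · have relj := (rel i.val (le_of_lt hlt)).2 ho
        have relj1 := (rel (i.val+1) hlt).1 (Odd.add_one ho)
        rw [cfv_drop (a ∘ σ) i.val hlt, cfv_drop a i.val hlt, relj1] at relj
        have h3 := cancel_aux _ _ _ _ hkne relj
        exact_mod_cast h3
end
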